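/- arXiv:2508.13731 — 3 statements merged into one kernel-verified Lean document; each statement's English description precedes it below -/
import Mathlib

section
/- Let W₁ : Y₀ → Y₁ and W₂ : Y₁ → Y₂ be 2-dimensional cobordisms such that the natural map π₀(∂_out W₁) → π₀(W₁) is bijective (every connected component of W₁ has exactly one outgoing boundary circle). Suppose (ν₀, ν₁) is compatible with W₁. Then (ν₁, ν₂) is compatible with W₂ if and only if (ν₀, ν₂) is compatible with W₂ ∘ W₁. -/
open scoped BigOperators

/-- An abstract compact 2-dimensional cobordism from the closed 1-manifold `Y₀`
(a finite disjoint union of circles, recorded by the finite type of its components)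
to `Y₁`: a finite set of connected components, the assignment of each incoming and
outgoing boundary circle to the component containing it, and the Euler
characteristic of each component. -/
structure Cobordism (Y₀ Y₁ : Type*) where
  comp : Type*
  compFinite : Finite comp
  inM : Y₀ → comp
  outM : Y₁ → comp
  chi : comp → ℤ

attribute [instance] Cobordism.compFinite

namespace Cobordism

variable {Y₀ Y₁ : Type*}

/-- `γ` of a connected component `σ`:
`γ(σ) = (|π₀(∂_out σ)| - |π₀(∂_in σ)| - χ(σ)) / 2`. -/
noncomputable def gammaC [Finite Y₀] [Finite Y₁] (W : Cobordism Y₀ Y₁)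
    (σ : W.comp) : ℚ :=
  ((Nat.card {y : Y₁ // W.outM y = σ} : ℚ)
      - (Nat.card {y : Y₀ // W.inM y = σ} : ℚ) - (W.chi σ : ℚ)) / 2

/-- Total `γ` of a cobordism:
`γ(W) = (|π₀(∂_out W)| - |π₀(∂_in W)| - χ(W)) / 2`. -/
noncomputable def gamma [Finite Y₀] [Finite Y₁] (W : Cobordism Y₀ Y₁) : ℚ :=
  ((Nat.card Y₁ : ℚ) - (Nat.card Y₀ : ℚ) - ((∑ᶠ σ : W.comp, W.chi σ : ℤ) : ℚ)) / 2

/-- The pair of integer weights `(ν₀, ν₁)` on the boundary circles is *compatible*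
with `W` if, for every connected component `σ` of `W`, the sum of `ν₁` over the
outgoing circles of `σ` equals the sum of `ν₀` over the incoming circles of `σ`
plus `γ(σ)`. -/
def Compatible [Finite Y₀] [Finite Y₁] (W : Cobordism Y₀ Y₁)
    (ν₀ : Y₀ → ℤ) (ν₁ : Y₁ → ℤ) : Prop :=
  ∀ σ : W.comp,
    ((∑ᶠ y : {y : Y₁ // W.outM y = σ}, ν₁ y.1 : ℤ) : ℚ)
      = ((∑ᶠ y : {y : Y₀ // W.inM y = σ}, ν₀ y.1 : ℤ) : ℚ) + W.gammaC σ

end Cobordism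

/-- `W` is the composite `W₂ ∘ W₁` of the cobordisms `W₁ : Y₀ → Y₁` and
`W₂ : Y₁ → Y₂`, where `p₁`, `p₂` record which component of `W` each component of
`W₁`, `W₂` lands in after gluing along `Y₁`: the boundary assignments agree, the
gluing identifications hold, the Euler characteristic of each component of `W` is
the sum of those of the constituent components (`χ(Y₁) = 0`), and the components of
`W` are exactly the classes of components of `W₁`, `W₂` under the equivalence
generated by gluing along circles of `Y₁`. -/
def Cobordism.IsComposite {Y₀ Y₁ Y₂ : Type*}
    (W : Cobordism Y₀ Y₂) (W₂ : Cobordism Y₁ Y₂) (W₁ : Cobordism Y₀ Y₁)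
    (p₁ : W₁.comp → W.comp) (p₂ : W₂.comp → W.comp) : Prop :=
  (∀ y : Y₀, W.inM y = p₁ (W₁.inM y)) ∧
  (∀ y : Y₂, W.outM y = p₂ (W₂.outM y)) ∧
  (∀ y : Y₁, p₁ (W₁.outM y) = p₂ (W₂.inM y)) ∧
  (∀ σ : W.comp,
    W.chi σ = (∑ᶠ τ : {τ : W₁.comp // p₁ τ = σ}, W₁.chi τ.1)
      + ∑ᶠ τ : {τ : W₂.comp // p₂ τ = σ}, W₂.chi τ.1) ∧
  (∀ a b : W₁.comp ⊕ W₂.comp,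
    Sum.elim p₁ p₂ a = Sum.elim p₁ p₂ b ↔
      Relation.EqvGen (fun a b : W₁.comp ⊕ W₂.comp => ∃ y : Y₁,
        (a = Sum.inl (W₁.outM y) ∧ b = Sum.inr (W₂.inM y)) ∨
        (b = Sum.inl (W₁.outM y) ∧ a = Sum.inr (W₂.inM y))) a b)

/- auxiliary lemmas -/

lemma finsum_subtype_eq_sum_filter' {ι M : Type*} [Fintype ι] [AddCommMonoid M]
    (p : ι → Prop) [DecidablePred p] (f : ι → M) :
    ∑ᶠ x : {x // p x}, f x.1 = ∑ x ∈ Finset.univ.filter p, f x := by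
  rw [finsum_eq_sum_of_fintype]
  exact (Finset.sum_subtype _ (by simp) f).symm

lemma natCard_subtype_eq_card_filter {ι : Type*} [Fintype ι]
    (p : ι → Prop) [DecidablePred p] :
    Nat.card {x // p x} = (Finset.univ.filter p).card := by
  rw [Nat.card_eq_fintype_card, Fintype.card_subtype]


/-- Lemma `CompositionCompatible` (2): if every connected
component of `W₁` has exactly one outgoing boundary circle (the natural map
`π₀(∂_out W₁) → π₀(W₁)` is bijective) and `(ν₀, ν₁)` is compatible with `W₁`, then
`(ν₁, ν₂)` is compatible with `W₂` if and only if `(ν₀, ν₂)` is compatible with the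
composite `W₂ ∘ W₁`. -/
theorem compatible_comp_iff {Y₀ Y₁ Y₂ : Type*} [Finite Y₀] [Finite Y₁] [Finite Y₂]
    (W₁ : Cobordism Y₀ Y₁) (W₂ : Cobordism Y₁ Y₂) (W : Cobordism Y₀ Y₂)
    (p₁ : W₁.comp → W.comp) (p₂ : W₂.comp → W.comp)
    (hW : W.IsComposite W₂ W₁ p₁ p₂)
    (hbij : Function.Bijective W₁.outM)
    (ν₀ : Y₀ → ℤ) (ν₁ : Y₁ → ℤ) (ν₂ : Y₂ → ℤ)
    (h₁ : W₁.Compatible ν₀ ν₁) :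
    W₂.Compatible ν₁ ν₂ ↔ W.Compatible ν₀ ν₂ := by
  classical
  letI : DecidableEq W₁.comp := Classical.decEq _
  letI : DecidableEq W₂.comp := Classical.decEq _
  letI : DecidableEq W.comp := Classical.decEq _
  letI : DecidableEq Y₁ := Classical.decEq _
  cases nonempty_fintype Y₀
  cases nonempty_fintype Y₁
  cases nonempty_fintype Y₂
  cases nonempty_fintype W.comp
  cases nonempty_fintype W₁.comp
  cases nonempty_fintype W₂.comp
  obtain ⟨hin, hout, hglue, hchi, hrel⟩ := hW
  set e : Y₁ ≃ W₁.comp := Equiv.ofBijective W₁.outM hbij with he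
  have heapp : ∀ y : Y₁, e y = W₁.outM y := fun _ => rfl
  set g : W₁.comp → W₂.comp := fun τ => W₂.inM (e.symm τ) with hg
  -- p₁ = p₂ ∘ g
  have hpg : ∀ τ : W₁.comp, p₁ τ = p₂ (g τ) := by
    intro τ
    have h1 : W₁.outM (e.symm τ) = τ := e.apply_symm_apply τ
    have h2 := hglue (e.symm τ)
    rw [h1] at h2
    exact h2
  -- g (W₁.outM y) = W₂.inM y
  have hgout : ∀ y : Y₁, g (W₁.outM y) = W₂.inM y := by
    intro y
    show W₂.inM (e.symm (W₁.outM y)) = W₂.inM y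
    rw [← heapp, e.symm_apply_apply]
  -- p₂ injective
  have hp₂inj : Function.Injective p₂ := by
    intro a b hab
    have h2 := (hrel (Sum.inr a) (Sum.inr b)).mp (by simpa using hab)
    have key : ∀ x y : W₁.comp ⊕ W₂.comp,
        Relation.EqvGen (fun a b : W₁.comp ⊕ W₂.comp => ∃ y : Y₁,
          (a = Sum.inl (W₁.outM y) ∧ b = Sum.inr (W₂.inM y)) ∨
          (b = Sum.inl (W₁.outM y) ∧ a = Sum.inr (W₂.inM y))) x y →
        Sum.elim g id x = Sum.elim g id y := by
      intro x y h
      induction h with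
      | rel x y hxy =>
        obtain ⟨c, ⟨ha, hb⟩ | ⟨ha, hb⟩⟩ := hxy
        · subst ha; subst hb; simpa using hgout c
        · subst ha; subst hb; simpa using (hgout c).symm
      | refl x => rfl
      | symm x y _ ih => exact ih.symm
      | trans x y z _ _ ih₁ ih₂ => exact ih₁.trans ih₂
    simpa using key _ _ h2
  -- outgoing sums agree
  have houtEq : ∀ τ₂ : W₂.comp,
      (∑ᶠ y : {y : Y₂ // W.outM y = p₂ τ₂}, ν₂ y.1)
        = ∑ᶠ y : {y : Y₂ // W₂.outM y = τ₂}, ν₂ y.1 := by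
    intro τ₂
    rw [finsum_subtype_eq_sum_filter', finsum_subtype_eq_sum_filter']
    apply Finset.sum_congr _ (fun _ _ => rfl)
    apply Finset.filter_congr
    intro y _
    rw [hout y]
    simp [hp₂inj.eq_iff]
  -- main right-hand-side identity
  have hRHS : ∀ τ₂ : W₂.comp,
      ((∑ᶠ y : {y : Y₀ // W.inM y = p₂ τ₂}, ν₀ y.1 : ℤ) : ℚ) + W.gammaC (p₂ τ₂)
        = ((∑ᶠ y : {y : Y₁ // W₂.inM y = τ₂}, ν₁ y.1 : ℤ) : ℚ) + W₂.gammaC τ₂ := by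
    intro τ₂
    set F : Finset W₁.comp := Finset.univ.filter (fun τ₁ => g τ₁ = τ₂) with hF
    have hfilt₀ : (Finset.univ.filter (fun y₀ : Y₀ => W.inM y₀ = p₂ τ₂))
        = Finset.univ.filter (fun y₀ => g (W₁.inM y₀) = τ₂) := by
      apply Finset.filter_congr
      intro y _
      rw [hin y, hpg]
      simp [hp₂inj.eq_iff]
    -- A : incoming ν₀-sum
    have A : (∑ᶠ y : {y : Y₀ // W.inM y = p₂ τ₂}, ν₀ y.1)
        = ∑ τ₁ ∈ F, ∑ y₀ ∈ Finset.univ.filter (fun y₀ => W₁.inM y₀ = τ₁), ν₀ y₀ := by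
      rw [finsum_subtype_eq_sum_filter', hfilt₀]
      conv_rhs => rw [hF, Finset.sum_fiberwise_eq_sum_filter]
      apply Finset.sum_congr _ (fun _ _ => rfl)
      apply Finset.filter_congr
      intro y _
      simp
    -- B : incoming card
    have Bn : (Finset.univ.filter (fun y₀ : Y₀ => g (W₁.inM y₀) = τ₂)).card
        = ∑ τ₁ ∈ F, (Finset.univ.filter (fun y₀ => W₁.inM y₀ = τ₁)).card := by
      conv_rhs => rw [hF, Finset.sum_card_fiberwise_eq_card_filter]
      congr 1
      apply Finset.filter_congr
      intro y _
      simp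
    have B : ((Nat.card {y : Y₀ // W.inM y = p₂ τ₂} : ℚ))
        = ∑ τ₁ ∈ F, ((Finset.univ.filter (fun y₀ => W₁.inM y₀ = τ₁)).card : ℚ) := by
      rw [natCard_subtype_eq_card_filter, hfilt₀, Bn]
      push_cast
      rfl
    -- C : Euler characteristic
    have C : (W.chi (p₂ τ₂)) = (∑ τ₁ ∈ F, W₁.chi τ₁) + W₂.chi τ₂ := by
      rw [hchi (p₂ τ₂), finsum_subtype_eq_sum_filter', finsum_subtype_eq_sum_filter']
      congr 1
      · apply Finset.sum_congr _ (fun _ _ => rfl)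
        apply Finset.filter_congr
        intro τ _
        rw [hpg]
        simp [hp₂inj.eq_iff, hF]
      · have hone : (Finset.univ.filter (fun τ : W₂.comp => p₂ τ = p₂ τ₂)) = {τ₂} := by
          ext τ
          simp [hp₂inj.eq_iff]
        rw [hone, Finset.sum_singleton]
    -- D : outgoing cards
    have D : Nat.card {y : Y₂ // W.outM y = p₂ τ₂} = Nat.card {y : Y₂ // W₂.outM y = τ₂} := by
      rw [natCard_subtype_eq_card_filter, natCard_subtype_eq_card_filter]
      congr 1
      apply Finset.filter_congr
      intro y _
      rw [hout y]
      simp [hp₂inj.eq_iff]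
    -- E : middle ν₁-sum, reindexed by components of W₁
    have E : (∑ᶠ y : {y : Y₁ // W₂.inM y = τ₂}, ν₁ y.1)
        = ∑ τ₁ ∈ F, ν₁ (e.symm τ₁) := by
      rw [finsum_subtype_eq_sum_filter']
      apply Finset.sum_equiv e
      · intro y
        simp only [hF, Finset.mem_filter, Finset.mem_univ, true_and]
        rw [heapp, hgout]
      · intro y _
        rw [heapp, ← heapp, e.symm_apply_apply]
    -- G : middle card
    have G : (Nat.card {y : Y₁ // W₂.inM y = τ₂}) = F.card := by
      rw [natCard_subtype_eq_card_filter]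
      apply Finset.card_bij (fun y _ => e y)
      · intro y hy
        simp only [hF, Finset.mem_filter, Finset.mem_univ, true_and] at hy ⊢
        rw [heapp, hgout, hy]
      · intro a _ b _ hab
        exact e.injective hab
      · intro τ₁ hτ₁
        refine ⟨e.symm τ₁, ?_, e.apply_symm_apply τ₁⟩
        simp only [Finset.mem_filter, Finset.mem_univ, true_and, hF] at hτ₁ ⊢
        exact hτ₁
    -- H : compatibility of W₁, in explicit form
    have H : ∀ τ₁ : W₁.comp, ((ν₁ (e.symm τ₁) : ℤ) : ℚ)
        = (∑ y₀ ∈ Finset.univ.filter (fun y₀ => W₁.inM y₀ = τ₁), (ν₀ y₀ : ℚ))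
          + (1 - ((Finset.univ.filter (fun y₀ => W₁.inM y₀ = τ₁)).card : ℚ)
              - (W₁.chi τ₁ : ℚ)) / 2 := by
      intro τ₁
      have huniq : ∀ y : Y₁, W₁.outM y = τ₁ ↔ y = e.symm τ₁ := by
        intro y
        rw [← heapp]
        exact ⟨fun h => by rw [← h, e.symm_apply_apply], fun h => by rw [h, e.apply_symm_apply]⟩
      have h1 := h₁ τ₁
      have hsum : (∑ᶠ y : {y : Y₁ // W₁.outM y = τ₁}, ν₁ y.1) = ν₁ (e.symm τ₁) := by
        rw [finsum_subtype_eq_sum_filter']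
        have : (Finset.univ.filter (fun y : Y₁ => W₁.outM y = τ₁)) = {e.symm τ₁} := by
          ext y; simp [huniq]
        rw [this, Finset.sum_singleton]
      have hcard : (Nat.card {y : Y₁ // W₁.outM y = τ₁}) = 1 := by
        rw [natCard_subtype_eq_card_filter]
        have : (Finset.univ.filter (fun y : Y₁ => W₁.outM y = τ₁)) = {e.symm τ₁} := by
          ext y; simp [huniq]
        rw [this, Finset.card_singleton]
      rw [hsum] at h1
      rw [h1]
      unfold Cobordism.gammaC
      rw [hcard, natCard_subtype_eq_card_filter, finsum_subtype_eq_sum_filter']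
      push_cast
      ring
    -- put everything together
    unfold Cobordism.gammaC
    rw [A, E, D, G, B, C]
    push_cast
    rw [Finset.sum_congr rfl (fun τ₁ _ => H τ₁)]
    rw [Finset.sum_add_distrib, ← Finset.sum_div, Finset.sum_sub_distrib,
      Finset.sum_sub_distrib, Finset.sum_const, nsmul_eq_mul, mul_one]
    ring
  -- trivial components not in the range of p₂
  have htriv : ∀ σ : W.comp, (∀ τ₂ : W₂.comp, p₂ τ₂ ≠ σ) →
      ((∑ᶠ y : {y : Y₂ // W.outM y = σ}, ν₂ y.1 : ℤ) : ℚ)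
        = ((∑ᶠ y : {y : Y₀ // W.inM y = σ}, ν₀ y.1 : ℤ) : ℚ) + W.gammaC σ := by
    intro σ hσ
    haveI h2e : IsEmpty {y : Y₂ // W.outM y = σ} := by
      refine ⟨fun ⟨y, hy⟩ => hσ (W₂.outM y) ?_⟩
      rw [← hout y]; exact hy
    haveI h0e : IsEmpty {y : Y₀ // W.inM y = σ} := by
      refine ⟨fun ⟨y, hy⟩ => hσ (g (W₁.inM y)) ?_⟩
      rw [← hpg, ← hin y]; exact hy
    haveI h1e : IsEmpty {τ : W₁.comp // p₁ τ = σ} := by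
      refine ⟨fun ⟨τ, hτ⟩ => hσ (g τ) ?_⟩
      rw [← hpg]; exact hτ
    haveI h2e' : IsEmpty {τ : W₂.comp // p₂ τ = σ} := ⟨fun ⟨τ, hτ⟩ => hσ τ hτ⟩
    have hchiz : W.chi σ = 0 := by
      rw [hchi σ, finsum_of_isEmpty, finsum_of_isEmpty, add_zero]
    unfold Cobordism.gammaC
    rw [finsum_of_isEmpty, finsum_of_isEmpty, hchiz]
    simp
  constructor
  · intro h2 σ
    by_cases hσ : ∃ τ₂ : W₂.comp, p₂ τ₂ = σ
    · obtain ⟨τ₂, rfl⟩ := hσ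
      rw [houtEq τ₂, hRHS τ₂]
      exact h2 τ₂
    · exact htriv σ (fun τ₂ h => hσ ⟨τ₂, h⟩)
  · intro h τ₂
    have := h (p₂ τ₂)
    rw [houtEq τ₂, hRHS τ₂] at this
    exact this
end

section
/- Let D be a link diagram and S a state. Then exactly one of the following holds: (1) for every circle C of D_S there exists a crossing c ∈ S such that the saddle cobordism ξ_c^{S\{c}} : D_{S\{c}} → D_S has a connected component Σ whose entire outgoing boundary is C (∂_out Σ = C); or (2) there is a circle C₀ of D_S such that every crossing c ∈ S is adjacent to C₀ and to exactly one other circle of D_S. -/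
open scoped BigOperators

/-- The two planar smoothings of a crossing, as pairings of the four darts
(corners) of the crossing, listed in cyclic (rotation) order `0,1,2,3`.
The `0`-smoothing pairs `0↔1`, `2↔3`; the `1`-smoothing pairs `0↔3`, `1↔2`. -/
def sm0 : Fin 4 → Fin 4 := ![1, 0, 3, 2]
def sm1 : Fin 4 → Fin 4 := ![3, 2, 1, 0]

/-- A (combinatorial model of an unoriented) link diagram: a finite set of crossings,
each carrying four darts in cyclic order, an arc structure given by a fixed-point-free
involution on darts, a sign recording the over/under information at each crossing
(it tells which smoothing is the `0`-smoothing), and a planarity condition: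
Euler's formula `F = V + 2·(#components)` for the 4-valent graph (`E = 2V`). -/
structure LinkDiagram where
  X : Type
  fintypeX : Fintype X
  decEqX : DecidableEq X
  sign : X → Bool
  arc : X × Fin 4 → X × Fin 4
  arc_invol : Function.Involutive arc
  arc_ne : ∀ d, arc d ≠ d
  planar :
    Nat.card (Quotient (⟨Relation.EqvGen fun a b => arc (a.1, a.2 + 1) = b,
        Relation.EqvGen.is_equivalence _⟩ : Setoid (X × Fin 4)))
      = Nat.card X +
        2 * Nat.card (Quotient (⟨Relation.EqvGen fun a b => arc a = b ∨ a.1 = b.1,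
            Relation.EqvGen.is_equivalence _⟩ : Setoid (X × Fin 4)))

attribute [instance] LinkDiagram.fintypeX LinkDiagram.decEqX

namespace LinkDiagram

variable (D : LinkDiagram)

/-- Darts: the four corners of each crossing. -/
abbrev Dart := D.X × Fin 4

/-- The pairing of darts at each crossing determined by the state `S`:
the smoothing at `c` is the `0`- or `1`-smoothing according to `c ∈ S`,
twisted by the sign (over/under data) of the crossing. -/
def smooth (S : Finset D.X) (d : D.Dart) : D.Dart :=
  (d.1, if xor (decide (d.1 ∈ S)) (D.sign d.1) then sm1 d.2 else sm0 d.2)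

/-- Two darts are directly related in the smoothing `D_S` if they are connected by
an arc of the diagram or paired at a crossing by the smoothing. -/
def BaseRel (S : Finset D.X) (a b : D.Dart) : Prop :=
  D.arc a = b ∨ D.smooth S a = b

/-- Two darts lie on the same circle of the smoothing `D_S`. -/
def CircleRel (S : Finset D.X) : D.Dart → D.Dart → Prop :=
  Relation.EqvGen (D.BaseRel S)

def circleSetoid (S : Finset D.X) : Setoid D.Dart :=
  ⟨D.CircleRel S, Relation.EqvGen.is_equivalence _⟩

/-- The set `π₀(D_S)` of circles of the smoothing `D_S`. -/
def Circles (S : Finset D.X) : Type := Quotient (D.circleSetoid S)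

/-- The circle of `D_S` through a given dart. -/
def cmk (S : Finset D.X) (d : D.Dart) : D.Circles S := Quotient.mk _ d

instance (S : Finset D.X) : Finite (D.Circles S) :=
  Quotient.finite _

/-- A twisting weight on a link diagram: an integer for each circle of each smoothing
such that (a) `ν(C) = ν(C₁') + ν(C₂') - 1` when a crossing splits `C` into `C₁', C₂'`;
(b) `ν(C₁) + ν(C₂) = ν(C')` when a crossing merges `C₁, C₂` into `C'`; and
(c) `ν` is unchanged on circles not adjacent to the crossing.
Note that the two strands of a crossing `c` pass through the darts `(c,0)` and `(c,2)`
in every smoothing, so `c` splits iff `(c,0)` and `(c,2)` lie on the same circle. -/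
def IsTwistingWeight (ν : ∀ S : Finset D.X, D.Circles S → ℤ) : Prop :=
  ∀ (S : Finset D.X) (c : D.X), c ∉ S →
    ((D.CircleRel S (c, 0) (c, 2) →
        ν S (D.cmk S (c, 0)) =
          ν (insert c S) (D.cmk (insert c S) (c, 0)) +
            ν (insert c S) (D.cmk (insert c S) (c, 2)) - 1) ∧
     (¬ D.CircleRel S (c, 0) (c, 2) →
        ν S (D.cmk S (c, 0)) + ν S (D.cmk S (c, 2)) =
          ν (insert c S) (D.cmk (insert c S) (c, 0))) ∧
     (∀ d : D.Dart, ¬ D.CircleRel S d (c, 0) → ¬ D.CircleRel S d (c, 2) →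
        ν S (D.cmk S d) = ν (insert c S) (D.cmk (insert c S) d)))

end LinkDiagram

namespace LinkDiagram

variable (D : LinkDiagram)

/-- Two darts lie in the same connected component of the saddle cobordism
`ξ_c^S : D_S → D_{S∪{c}}`: the components of this cobordism are the equivalence
classes of darts under the relations of both smoothings `D_S` and `D_{S∪{c}}`. -/
def SaddleRel (S : Finset D.X) (c : D.X) : D.Dart → D.Dart → Prop :=
  Relation.EqvGen (fun a b => D.BaseRel S a b ∨ D.BaseRel (insert c S) a b)

/-- `γ` of the connected component of the saddle cobordism `ξ_c^S` containing the
dart `d₀`: it is `1` if `c` splits a circle and the component is the one containing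
the saddle, and `0` otherwise (merge saddles and cylinders). -/
noncomputable def saddleGamma (S : Finset D.X) (c : D.X) (d₀ : D.Dart) : ℤ :=
  letI := Classical.propDecidable
    (D.CircleRel S (c, 0) (c, 2) ∧ D.SaddleRel S c (c, 0) d₀)
  if D.CircleRel S (c, 0) (c, 2) ∧ D.SaddleRel S c (c, 0) d₀ then 1 else 0

/-- Compatibility of the pair of weights `(ν, ν')` with the saddle cobordism
`ξ_c^S : D_S → D_{S∪{c}}`: for each connected component (represented by a dart `d₀`
on it), the sum of `ν'` over its outgoing boundary circles equals the sum of `ν`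
over its incoming boundary circles plus `γ` of the component. -/
def CompatSaddle (S : Finset D.X) (c : D.X)
    (ν : D.Circles S → ℤ) (ν' : D.Circles (insert c S) → ℤ) : Prop :=
  ∀ d₀ : D.Dart,
    (∑ᶠ C : {C : D.Circles (insert c S) //
        ∃ d, C = D.cmk (insert c S) d ∧ D.SaddleRel S c d d₀}, ν' C.1)
      = (∑ᶠ C : {C : D.Circles S //
          ∃ d, C = D.cmk S d ∧ D.SaddleRel S c d d₀}, ν C.1)
        + D.saddleGamma S c d₀

end LinkDiagram


namespace LinkDiagram

variable (D : LinkDiagram)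

lemma smooth_smooth (S : Finset D.X) (d : D.Dart) : D.smooth S (D.smooth S d) = d := by
  have h0 : ∀ x : Fin 4, sm0 (sm0 x) = x := by decide
  have h1 : ∀ x : Fin 4, sm1 (sm1 x) = x := by decide
  unfold smooth
  dsimp only
  split_ifs with h <;> simp [h0, h1]

lemma baseRel_symm {S : Finset D.X} {a b : D.Dart} (h : D.BaseRel S a b) :
    D.BaseRel S b a := by
  rcases h with h | h
  · exact Or.inl (by rw [← h]; exact D.arc_invol a)
  · exact Or.inr (by rw [← h]; exact D.smooth_smooth S a)

lemma smooth_erase_eq {S : Finset D.X} {c : D.X} {a : D.Dart} (h : a.1 ≠ c) :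
    D.smooth (S.erase c) a = D.smooth S a := by
  unfold smooth
  have hd : decide (a.1 ∈ S.erase c) = decide (a.1 ∈ S) := by
    simp [Finset.mem_erase, h]
  rw [hd]

/-- `x` lies on the circle of `(c,0)` or of `(c,2)` in `D_S`. -/
def Adj (S : Finset D.X) (c : D.X) (x : D.Dart) : Prop :=
  D.CircleRel S (c, 0) x ∨ D.CircleRel S (c, 2) x

lemma adj_dart (S : Finset D.X) (c : D.X) (j : Fin 4) : D.Adj S c (c, j) := by
  have hb : D.BaseRel S (c, j) (D.smooth S (c, j)) := Or.inr rfl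
  unfold Adj
  by_cases h : xor (decide (c ∈ S)) (D.sign c) <;>
    [ (have hb' : D.BaseRel S (c, j) (c, sm1 j) := by
        simpa [smooth, h] using hb);
      (have hb' : D.BaseRel S (c, j) (c, sm0 j) := by
        simpa [smooth, h] using hb) ] <;>
    fin_cases j <;>
    simp only [sm0, sm1, Matrix.cons_val_zero, Matrix.cons_val_one, Matrix.head_cons,
      Matrix.cons_val_two, Matrix.cons_val_three, Matrix.tail_cons] at hb' <;>
    first
      | exact Or.inl (Relation.EqvGen.refl _)
      | exact Or.inr (Relation.EqvGen.refl _)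
      | exact Or.inl (Relation.EqvGen.symm _ _ (Relation.EqvGen.rel _ _ hb'))
      | exact Or.inr (Relation.EqvGen.symm _ _ (Relation.EqvGen.rel _ _ hb'))

lemma adj_of_fst {S : Finset D.X} {c : D.X} {d : D.Dart} (h : d.1 = c) :
    D.Adj S c d := by
  obtain ⟨x, j⟩ := d
  cases h
  exact D.adj_dart S x j

lemma adj_of_rel {S : Finset D.X} {c : D.X} {a b : D.Dart}
    (h : D.CircleRel S a b) (ha : D.Adj S c a) : D.Adj S c b :=
  ha.imp (fun h' => Relation.EqvGen.trans _ _ _ h' h)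
    (fun h' => Relation.EqvGen.trans _ _ _ h' h)

/-- The union relation defining the saddle cobordism `ξ_c^{S∖c} : D_{S∖c} → D_S`. -/
def SRel (S : Finset D.X) (c : D.X) (a b : D.Dart) : Prop :=
  D.BaseRel (S.erase c) a b ∨ D.BaseRel S a b

lemma saddleRel_eq {S : Finset D.X} {c : D.X} (hc : c ∈ S) :
    D.SaddleRel (S.erase c) c = Relation.EqvGen (D.SRel S c) := by
  unfold SaddleRel SRel
  rw [Finset.insert_erase hc]

/-- All four darts at `c` are related in the saddle cobordism. -/
lemma saddle_darts {S : Finset D.X} {c : D.X} (hc : c ∈ S) (i j : Fin 4) :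
    Relation.EqvGen (D.SRel S c) (c, i) (c, j) := by
  have hA : ∀ i : Fin 4, D.SRel S c (c, i) (D.smooth (S.erase c) (c, i)) :=
    fun i => Or.inl (Or.inr rfl)
  have hB : ∀ i : Fin 4, D.SRel S c (c, i) (D.smooth S (c, i)) :=
    fun i => Or.inr (Or.inr rfl)
  have hse : ∀ i : Fin 4, D.smooth (S.erase c) (c, i)
      = (c, if D.sign c then sm1 i else sm0 i) := by
    intro i
    simp only [smooth, Finset.mem_erase]
    cases hs : D.sign c <;> simp
  have hsS : ∀ i : Fin 4, D.smooth S (c, i)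
      = (c, if D.sign c then sm0 i else sm1 i) := by
    intro i
    simp only [smooth]
    cases hs : D.sign c <;> simp [hc]
  have h0 : ∀ i : Fin 4, Relation.EqvGen (D.SRel S c) (c, i) (c, sm0 i) := by
    intro i
    cases hs : D.sign c
    · have := hA i
      rw [hse i, hs, if_neg (by simp)] at this
      exact Relation.EqvGen.rel _ _ this
    · have := hB i
      rw [hsS i, hs, if_pos rfl] at this
      exact Relation.EqvGen.rel _ _ this
  have h1 : ∀ i : Fin 4, Relation.EqvGen (D.SRel S c) (c, i) (c, sm1 i) := by
    intro i
    cases hs : D.sign c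
    · have := hB i
      rw [hsS i, hs, if_neg (by simp)] at this
      exact Relation.EqvGen.rel _ _ this
    · have := hA i
      rw [hse i, hs, if_pos rfl] at this
      exact Relation.EqvGen.rel _ _ this
  -- chain 0-1-2-3 using sm0 and sm1 steps
  have e01 : Relation.EqvGen (D.SRel S c) (c, 0) (c, 1) := by
    have := h0 0; simpa [sm0] using this
  have e12 : Relation.EqvGen (D.SRel S c) (c, 1) (c, 2) := by
    have := h1 1; simpa [sm1] using this
  have e23 : Relation.EqvGen (D.SRel S c) (c, 2) (c, 3) := by
    have := h0 2; simpa [sm0] using this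
  have key : ∀ i : Fin 4, Relation.EqvGen (D.SRel S c) (c, 0) (c, i) := by
    intro i
    fin_cases i
    · exact Relation.EqvGen.refl _
    · exact e01
    · exact Relation.EqvGen.trans _ _ _ e01 e12
    · exact Relation.EqvGen.trans _ _ _ (Relation.EqvGen.trans _ _ _ e01 e12) e23
  exact Relation.EqvGen.trans _ _ _ (Relation.EqvGen.symm _ _ (key i)) (key j)

/-- Forward structure lemma: components of the saddle are either single circles of
`D_S` or the merge of the circles adjacent to `c`. -/
lemma saddle_to {S : Finset D.X} {c : D.X} {a b : D.Dart}
    (h : Relation.EqvGen (D.SRel S c) a b) :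
    D.CircleRel S a b ∨ (D.Adj S c a ∧ D.Adj S c b) := by
  induction h with
  | rel a b hab =>
    rcases hab with h | h
    · rcases h with h | h
      · exact Or.inl (Relation.EqvGen.rel _ _ (Or.inl h))
      · by_cases hac : a.1 = c
        · refine Or.inr ⟨D.adj_of_fst hac, D.adj_of_fst ?_⟩
          rw [← h]
          exact hac
        · exact Or.inl (Relation.EqvGen.rel _ _ (Or.inr (by
            rw [← D.smooth_erase_eq hac]; exact h)))
    · exact Or.inl (Relation.EqvGen.rel _ _ h)
  | refl a => exact Or.inl (Relation.EqvGen.refl _)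
  | symm a b _ ih =>
    rcases ih with h | ⟨h1, h2⟩
    · exact Or.inl (Relation.EqvGen.symm _ _ h)
    · exact Or.inr ⟨h2, h1⟩
  | trans a b c' _ _ iha ihb =>
    rcases iha with h | ⟨ha, hb⟩
    · rcases ihb with h' | ⟨hb', hc'⟩
      · exact Or.inl (Relation.EqvGen.trans _ _ _ h h')
      · exact Or.inr ⟨D.adj_of_rel (Relation.EqvGen.symm _ _ h) hb', hc'⟩
    · rcases ihb with h' | ⟨hb', hc'⟩
      · exact Or.inr ⟨ha, D.adj_of_rel h' hb⟩
      · exact Or.inr ⟨ha, hc'⟩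

lemma circle_to_saddle {S : Finset D.X} {c : D.X} {a b : D.Dart}
    (h : D.CircleRel S a b) : Relation.EqvGen (D.SRel S c) a b :=
  Relation.EqvGen.mono (r := D.BaseRel S) (p := D.SRel S c) (fun _ _ h' => Or.inr h') a b h

lemma adj_to_saddle {S : Finset D.X} {c : D.X} (hc : c ∈ S) {a b : D.Dart}
    (ha : D.Adj S c a) (hb : D.Adj S c b) :
    Relation.EqvGen (D.SRel S c) a b := by
  have step : ∀ {x : D.Dart}, D.Adj S c x →
      Relation.EqvGen (D.SRel S c) (c, 0) x := by
    intro x hx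
    rcases hx with h | h
    · exact D.circle_to_saddle h
    · exact Relation.EqvGen.trans _ _ _ (D.saddle_darts hc 0 2) (D.circle_to_saddle h)
  exact Relation.EqvGen.trans _ _ _ (Relation.EqvGen.symm _ _ (step ha)) (step hb)

lemma adj_rel {S : Finset D.X} {c : D.X} {a b : D.Dart}
    (h02 : D.CircleRel S (c, 0) (c, 2))
    (ha : D.Adj S c a) (hb : D.Adj S c b) : D.CircleRel S a b := by
  have step : ∀ {x : D.Dart}, D.Adj S c x → D.CircleRel S (c, 0) x := by
    intro x hx
    rcases hx with h | h
    · exact h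
    · exact Relation.EqvGen.trans _ _ _ h02 h
  exact Relation.EqvGen.trans _ _ _ (Relation.EqvGen.symm _ _ (step ha)) (step hb)

/-- The key per-crossing characterization. -/
lemma key_iff {S : Finset D.X} {c : D.X} (hc : c ∈ S) (d₀ : D.Dart) :
    (∀ d : D.Dart, D.SaddleRel (S.erase c) c d d₀ → D.CircleRel S d d₀) ↔
      (¬ D.Adj S c d₀ ∨ D.CircleRel S (c, 0) (c, 2)) := by
  rw [D.saddleRel_eq hc]
  constructor
  · intro H
    by_cases hadj : D.Adj S c d₀
    · right
      have h0 : D.CircleRel S (c, 0) d₀ :=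
        H (c, 0) (D.adj_to_saddle hc (D.adj_dart S c 0) hadj)
      have h2 : D.CircleRel S (c, 2) d₀ :=
        H (c, 2) (D.adj_to_saddle hc (D.adj_dart S c 2) hadj)
      exact Relation.EqvGen.trans _ _ _ h0 (Relation.EqvGen.symm _ _ h2)
    · exact Or.inl hadj
  · rintro (hnadj | h02) d hd
    · rcases D.saddle_to hd with h | ⟨_, hb⟩
      · exact h
      · exact absurd hb hnadj
    · rcases D.saddle_to hd with h | ⟨ha, hb⟩
      · exact h
      · exact D.adj_rel h02 ha hb

end LinkDiagram

/-- Lemma `TargetCircle`: for every state `S` exactly one of the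
following holds: (1) every circle `C` of `D_S` (through a dart `d₀`) is the entire
outgoing boundary of a connected component of `ξ_c^{S∖{c}} : D_{S∖{c}} → D_S` for
some `c ∈ S`; or (2) there is a circle `C₀` of `D_S` (through a dart `d₀`) such that
every crossing `c ∈ S` is adjacent to `C₀` and to one other circle of `D_S`. -/
theorem target_circle (D : LinkDiagram) (S : Finset D.X) :
    Xor'
      (∀ d₀ : D.Dart, ∃ c ∈ S,
        ∀ d : D.Dart, D.SaddleRel (S.erase c) c d d₀ → D.CircleRel S d d₀)
      (∃ d₀ : D.Dart, ∀ c ∈ S,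
        (D.CircleRel S (c, 0) d₀ ∨ D.CircleRel S (c, 2) d₀) ∧
          ¬ D.CircleRel S (c, 0) (c, 2)) := by
  by_cases hB : ∃ d₀ : D.Dart, ∀ c ∈ S,
      (D.CircleRel S (c, 0) d₀ ∨ D.CircleRel S (c, 2) d₀) ∧
        ¬ D.CircleRel S (c, 0) (c, 2)
  · refine Or.inr ⟨hB, ?_⟩
    intro hA
    obtain ⟨d₀, hd₀⟩ := hB
    obtain ⟨c, hcS, hkey⟩ := hA d₀
    rw [D.key_iff hcS] at hkey
    obtain ⟨hadj, hns⟩ := hd₀ c hcS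
    rcases hkey with h | h
    · exact h hadj
    · exact hns h
  · refine Or.inl ⟨fun d₀ => ?_, hB⟩
    push_neg at hB
    obtain ⟨c, hcS, hnc⟩ := hB d₀
    refine ⟨c, hcS, ?_⟩
    rw [D.key_iff hcS]
    by_cases hadj : D.Adj S c d₀
    · right
      exact hnc (by unfold LinkDiagram.Adj at hadj; exact hadj)
    · exact Or.inl hadj
end

section
/- Let D be a connected link diagram (the underlying 4-valent plane graph is connected). Then there exists a state S ⊆ 𝒳(D) such that the smoothing D_S is connected, i.e., consists of a single circle. -/
open scoped BigOperators

/-! ### Auxiliary lemmas for the proof -/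

lemma sm0_sm0 : ∀ i, sm0 (sm0 i) = i := by decide
lemma sm1_sm1 : ∀ i, sm1 (sm1 i) = i := by decide
lemma sm0_ne : ∀ i, sm0 i ≠ i := by decide
lemma sm1_ne : ∀ i, sm1 i ≠ i := by decide

/-- A finite set stable under a fixed-point-free involution has even cardinality. -/
lemma even_card_invol {β : Type*} [DecidableEq β] (f : β → β) (K : Finset β)
    (hmem : ∀ x ∈ K, f x ∈ K) (hinv : ∀ x ∈ K, f (f x) = x) (hne : ∀ x ∈ K, f x ≠ x) :
    Even K.card := by
  induction K using Finset.strongInduction with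
  | _ K ih =>
    rcases K.eq_empty_or_nonempty with rfl | ⟨x, hx⟩
    · simp
    · have hfx : f x ∈ K := hmem x hx
      have hxfx : f x ≠ x := hne x hx
      set K' := (K.erase x).erase (f x) with hK'
      have hmem' : ∀ y ∈ K', y ∈ K ∧ y ≠ x ∧ y ≠ f x := by
        intro y hy
        rw [hK', Finset.mem_erase, Finset.mem_erase] at hy
        tauto
      have hsub : K' ⊂ K := by
        refine Finset.ssubset_of_subset_of_ssubset ?_ (Finset.erase_ssubset hx)
        rw [hK']
        exact Finset.erase_subset _ _
      have h1 : ∀ y ∈ K', f y ∈ K' := by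
        intro y hy
        obtain ⟨hyK, hyx, hyfx⟩ := hmem' y hy
        rw [hK', Finset.mem_erase, Finset.mem_erase]
        refine ⟨?_, ?_, hmem y hyK⟩
        · intro h
          exact hyx (by rw [← hinv y hyK, h, hinv x hx])
        · intro h
          exact hyfx (by rw [← hinv y hyK, h])
      have hE' : Even K'.card :=
        ih K' hsub (fun y hy => h1 y hy) (fun y hy => hinv y (hmem' y hy).1)
          (fun y hy => hne y (hmem' y hy).1)
      have hfxe : f x ∈ K.erase x := Finset.mem_erase.mpr ⟨hxfx, hfx⟩
      have hc1 : (K.erase x).card = K.card - 1 := Finset.card_erase_of_mem hx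
      have hc2 : K'.card = (K.erase x).card - 1 := by
        rw [hK']; exact Finset.card_erase_of_mem hfxe
      have hpos : 0 < K.card := Finset.card_pos.mpr ⟨x, hx⟩
      have hpos2 : 0 < (K.erase x).card := Finset.card_pos.mpr ⟨f x, hfxe⟩
      obtain ⟨k, hk⟩ := hE'
      exact ⟨k + 1, by omega⟩

lemma eqvGen_le {α : Type*} {r s : α → α → Prop} (hs : Equivalence s)
    (h : ∀ a b, r a b → s a b) {a b : α} (hab : Relation.EqvGen r a b) : s a b :=
  hs.eqvGen_eq ▸ Relation.EqvGen.mono h _ _ hab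

namespace LinkDiagram

variable (D : LinkDiagram)

lemma smooth_fst (S : Finset D.X) (d : D.Dart) : (D.smooth S d).1 = d.1 := rfl

/-- The smoothing pairing at a crossing. -/
def csm (S : Finset D.X) (c : D.X) : Fin 4 → Fin 4 :=
  if xor (decide (c ∈ S)) (D.sign c) then sm1 else sm0

lemma smooth_c (S : Finset D.X) (c : D.X) (i : Fin 4) :
    D.smooth S (c, i) = (c, D.csm S c i) := by
  simp only [smooth, csm]
  split <;> rfl

lemma smooth_ne (S : Finset D.X) (d : D.Dart) : D.smooth S d ≠ d := by
  obtain ⟨c, i⟩ := d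
  rw [D.smooth_c]
  intro h
  have h2 : D.csm S c i = i := congrArg Prod.snd h
  unfold csm at h2
  split at h2
  · exact sm1_ne i h2
  · exact sm0_ne i h2

lemma smooth_congr {S S' : Finset D.X} {c : D.X} (h : ∀ x, x ≠ c → (x ∈ S ↔ x ∈ S'))
    {d : D.Dart} (hd : d.1 ≠ c) : D.smooth S d = D.smooth S' d := by
  obtain ⟨a, i⟩ := d
  have hdec : decide (a ∈ S) = decide (a ∈ S') := decide_eq_decide.mpr (h a hd)
  simp only [smooth, hdec]

/-- The relation of the smoothing with the pairing at `c` removed. -/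
def delRel (S : Finset D.X) (c : D.X) (x y : D.Dart) : Prop :=
  D.arc x = y ∨ (x.1 ≠ c ∧ D.smooth S x = y)

lemma delRel_le_base (S : Finset D.X) (c : D.X) :
    ∀ x y, D.delRel S c x y → D.BaseRel S x y := by
  rintro x y (h | ⟨_, h⟩)
  · exact Or.inl h
  · exact Or.inr h

lemma circle_of_del {S : Finset D.X} {c : D.X} {x y : D.Dart}
    (h : Relation.EqvGen (D.delRel S c) x y) : D.CircleRel S x y :=
  Relation.EqvGen.mono (D.delRel_le_base S c) _ _ h

lemma delRel_congr {S S' : Finset D.X} {c : D.X} (h : ∀ x, x ≠ c → (x ∈ S ↔ x ∈ S')) :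
    D.delRel S c = D.delRel S' c := by
  funext x y
  unfold delRel
  by_cases hx : x.1 = c
  · apply propext; simp [hx]
  · rw [D.smooth_congr h hx]

/-- From any dart of a crossing there is a `delRel`-path to another dart of the
same crossing (parity argument with the two fixed-point-free involutions). -/
lemma exists_exit (S : Finset D.X) (c : D.X) (i : Fin 4) :
    ∃ j : Fin 4, j ≠ i ∧ Relation.EqvGen (D.delRel S c) (c, i) (c, j) := by
  classical
  by_contra hcon
  push_neg at hcon
  set Q := Relation.EqvGen (D.delRel S c) with hQ
  have hEq : Equivalence Q := Relation.EqvGen.is_equivalence _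
  set K : Finset D.Dart := Finset.univ.filter (fun x => Q (c, i) x) with hK
  have hmemK : ∀ x, x ∈ K ↔ Q (c, i) x := by intro x; simp [hK]
  have hciK : (c, i) ∈ K := (hmemK _).mpr (hEq.refl _)
  have honly : ∀ x ∈ K, x.1 = c → x = (c, i) := by
    rintro ⟨a, j⟩ hxK hx1
    cases hx1
    by_contra hne
    have hji : j ≠ i := fun h => hne (by rw [h])
    exact hcon j hji ((hmemK _).mp hxK)
  have heven1 : Even K.card := by
    apply even_card_invol D.arc K
    · intro x hxK
      exact (hmemK _).mpr (hEq.trans ((hmemK _).mp hxK) (Relation.EqvGen.rel _ _ (Or.inl rfl)))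
    · intro x _; exact D.arc_invol x
    · intro x _; exact D.arc_ne x
  have heven2 : Even (K.erase (c, i)).card := by
    apply even_card_invol (D.smooth S)
    · intro x hx
      rw [Finset.mem_erase] at hx
      obtain ⟨hxne, hxK⟩ := hx
      have hx1 : x.1 ≠ c := fun h => hxne (honly x hxK h)
      rw [Finset.mem_erase]
      refine ⟨fun h => hx1 (by rw [← D.smooth_fst S x, h]), ?_⟩
      exact (hmemK _).mpr (hEq.trans ((hmemK _).mp hxK)
        (Relation.EqvGen.rel _ _ (Or.inr ⟨hx1, rfl⟩)))
    · intro x _; exact D.smooth_smooth S x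
    · intro x _; exact D.smooth_ne S x
  have hcard : (K.erase (c, i)).card = K.card - 1 := Finset.card_erase_of_mem hciK
  have hpos : 0 < K.card := Finset.card_pos.mpr ⟨_, hciK⟩
  obtain ⟨a, ha⟩ := heven1
  obtain ⟨b, hb⟩ := heven2
  omega

/-- When `(c,0)` and `(c,2)` lie on distinct circles, the exits of `(c,0)` and
`(c,2)` are forced: they connect to their smoothing partners avoiding `c`. -/
lemma exit_edges {S : Finset D.X} {c : D.X} (h02 : ¬ D.CircleRel S (c, 0) (c, 2)) :
    Relation.EqvGen (D.delRel S c) (c, 0) (c, D.csm S c 0) ∧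
    Relation.EqvGen (D.delRel S c) (c, 2) (c, D.csm S c 2) := by
  have hEq : Equivalence (D.CircleRel S) := Relation.EqvGen.is_equivalence _
  have edge : ∀ j : Fin 4, D.CircleRel S (c, j) (c, D.csm S c j) :=
    fun j => Relation.EqvGen.rel _ _ (Or.inr (D.smooth_c S c j))
  obtain ⟨j0, hj0ne, hj0⟩ := D.exists_exit S c 0
  obtain ⟨j2, hj2ne, hj2⟩ := D.exists_exit S c 2
  have hc0 : D.CircleRel S (c, 0) (c, j0) := D.circle_of_del hj0
  have hc2 : D.CircleRel S (c, 2) (c, j2) := D.circle_of_del hj2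
  have hj02 : j0 ≠ 2 := fun h => h02 (h ▸ hc0)
  have hj0c : j0 ≠ D.csm S c 2 := by
    intro h
    exact h02 (hEq.trans hc0 (hEq.symm (h ▸ edge 2)))
  have hj20 : j2 ≠ 0 := fun h => h02 (hEq.symm (h ▸ hc2))
  have hj2c : j2 ≠ D.csm S c 0 := by
    intro h
    exact h02 (hEq.trans (edge 0) (hEq.symm (h ▸ hc2)))
  have hm : (D.csm S c 0 = 1 ∧ D.csm S c 2 = 3) ∨ (D.csm S c 0 = 3 ∧ D.csm S c 2 = 1) := by
    unfold csm
    split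
    · right; exact ⟨rfl, rfl⟩
    · left; exact ⟨rfl, rfl⟩
  rcases hm with ⟨h0, h2⟩ | ⟨h0, h2⟩ <;> rw [h2] at hj0c <;> rw [h0] at hj2c <;> rw [h0, h2]
  · have e0 : j0 = 1 := by
      have : ∀ j : Fin 4, j ≠ 0 → j ≠ 2 → j ≠ 3 → j = 1 := by decide
      exact this j0 hj0ne hj02 hj0c
    have e2 : j2 = 3 := by
      have : ∀ j : Fin 4, j ≠ 2 → j ≠ 0 → j ≠ 1 → j = 3 := by decide
      exact this j2 hj2ne hj20 hj2c
    exact ⟨e0 ▸ hj0, e2 ▸ hj2⟩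
  · have e0 : j0 = 3 := by
      have : ∀ j : Fin 4, j ≠ 0 → j ≠ 2 → j ≠ 1 → j = 3 := by decide
      exact this j0 hj0ne hj02 hj0c
    have e2 : j2 = 1 := by
      have : ∀ j : Fin 4, j ≠ 2 → j ≠ 0 → j ≠ 3 → j = 1 := by decide
      exact this j2 hj2ne hj20 hj2c
    exact ⟨e0 ▸ hj0, e2 ▸ hj2⟩

/-- Toggling a crossing whose two strands lie on different circles keeps all
base relations of the old smoothing within the circles of the new smoothing. -/
lemma base_le_toggle {S S' : Finset D.X} {c : D.X}
    (hSS' : ∀ x, x ≠ c → (x ∈ S ↔ x ∈ S'))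
    (h02 : ¬ D.CircleRel S (c, 0) (c, 2)) :
    ∀ x y, D.BaseRel S x y → D.CircleRel S' x y := by
  have hdel : ∀ {x y : D.Dart}, Relation.EqvGen (D.delRel S c) x y → D.CircleRel S' x y := by
    intro x y h
    rw [D.delRel_congr hSS'] at h
    exact D.circle_of_del h
  have hEq' : Equivalence (D.CircleRel S') := Relation.EqvGen.is_equivalence _
  obtain ⟨e0, e2⟩ := D.exit_edges h02
  have H0 : D.CircleRel S' (c, 0) (c, D.csm S c 0) := hdel e0
  have H2 : D.CircleRel S' (c, 2) (c, D.csm S c 2) := hdel e2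
  have hedge : ∀ j : Fin 4, D.CircleRel S' (c, j) (c, D.csm S c j) := by
    have hm : (D.csm S c = sm0) ∨ (D.csm S c = sm1) := by
      unfold csm; split
      · exact Or.inr rfl
      · exact Or.inl rfl
    intro j
    rcases hm with h | h <;> rw [h] at H0 H2 ⊢ <;> fin_cases j
    · exact H0
    · exact hEq'.symm H0
    · exact H2
    · exact hEq'.symm H2
    · exact H0
    · exact hEq'.symm H2
    · exact H2
    · exact hEq'.symm H0
  intro x y hxy
  rcases hxy with h | h
  · exact Relation.EqvGen.rel _ _ (Or.inl h)
  · by_cases hx : x.1 = c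
    · obtain ⟨a, j⟩ := x
      cases hx
      rw [D.smooth_c] at h
      exact h ▸ hedge j
    · rw [D.smooth_congr hSS' hx] at h
      exact Relation.EqvGen.rel _ _ (Or.inr h)

/-- Toggling a crossing whose two strands lie on different circles strictly
decreases the number of circles. -/
lemma card_toggle_lt {S S' : Finset D.X} {c : D.X}
    (hSS' : ∀ x, x ≠ c → (x ∈ S ↔ x ∈ S'))
    (hcmem : (c ∈ S) ↔ ¬ (c ∈ S'))
    (h02 : ¬ D.CircleRel S (c, 0) (c, 2)) :
    Nat.card (D.Circles S') < Nat.card (D.Circles S) := by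
  classical
  set T := Relation.EqvGen (fun x y : D.Dart => D.BaseRel S x y ∨ D.BaseRel S' x y) with hT
  have hTeq : Equivalence T := Relation.EqvGen.is_equivalence _
  have hST : ∀ x y, D.CircleRel S x y → T x y :=
    fun x y h => Relation.EqvGen.mono (fun a b hab => Or.inl hab) _ _ h
  have hTS' : ∀ x y, T x y → D.CircleRel S' x y := by
    intro x y h
    refine eqvGen_le (Relation.EqvGen.is_equivalence _) ?_ h
    rintro a b (hab | hab)
    · exact D.base_le_toggle hSS' h02 a b hab
    · exact Relation.EqvGen.rel _ _ hab
  have hb : decide (c ∈ S') = !decide (c ∈ S) := by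
    by_cases h : c ∈ S
    · simp [h, hcmem.mp h]
    · have hc' : c ∈ S' := by
        by_contra h'
        exact h (hcmem.mpr h')
      simp [h, hc']
  have hm : (D.csm S c = sm0 ∧ D.csm S' c = sm1) ∨ (D.csm S c = sm1 ∧ D.csm S' c = sm0) := by
    unfold csm
    rw [hb]
    cases hx : decide (c ∈ S) <;> cases hs : D.sign c <;> simp
  have edgeS : ∀ j, T (c, j) (c, D.csm S c j) :=
    fun j => Relation.EqvGen.rel _ _ (Or.inl (Or.inr (D.smooth_c S c j)))
  have edgeS' : ∀ j, T (c, j) (c, D.csm S' c j) :=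
    fun j => Relation.EqvGen.rel _ _ (Or.inr (Or.inr (D.smooth_c S' c j)))
  have hT02 : T (c, 0) (c, 2) := by
    rcases hm with ⟨h1, h2⟩ | ⟨h1, h2⟩
    · -- csm S = sm0, csm S' = sm1 : (c,0) ~S' (c,3) ~S (c,2)
      have a1 := edgeS' 0
      have a2 := edgeS 3
      rw [h2, show sm1 0 = 3 from rfl] at a1
      rw [h1, show sm0 3 = 2 from rfl] at a2
      exact hTeq.trans a1 a2
    · -- csm S = sm1, csm S' = sm0 : (c,0) ~S' (c,1) ~S (c,2)
      have a1 := edgeS' 0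
      have a2 := edgeS 1
      rw [h2, show sm0 0 = 1 from rfl] at a1
      rw [h1, show sm1 1 = 2 from rfl] at a2
      exact hTeq.trans a1 a2
  let st : Setoid D.Dart := ⟨T, hTeq⟩
  let QT := Quotient st
  have finQT : Finite QT := Quotient.finite _
  let f : D.Circles S → QT := Quotient.map' id (fun a b h => hST a b h)
  have fsurj : Function.Surjective f :=
    fun q => Quotient.inductionOn q (fun d => ⟨Quotient.mk _ d, rfl⟩)
  have fninj : ¬ Function.Injective f := by
    intro hf
    apply h02
    have heq : (Quotient.mk (D.circleSetoid S) (c, 0) : D.Circles S)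
        = Quotient.mk (D.circleSetoid S) (c, 2) := by
      apply hf
      exact Quotient.sound' hT02
    exact Quotient.exact' heq
  let g : QT → D.Circles S' := Quotient.map' id (fun a b h => hTS' a b h)
  have gsurj : Function.Surjective g :=
    fun q => Quotient.inductionOn q (fun d => ⟨Quotient.mk _ d, rfl⟩)
  have h1 : Nat.card (D.Circles S') ≤ Nat.card QT := Nat.card_le_card_of_surjective g gsurj
  have h2 : Nat.card QT < Nat.card (D.Circles S) := by
    have i1 : Fintype (D.Circles S) := Fintype.ofFinite _
    have i2 : Fintype QT := Fintype.ofFinite _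
    rw [Nat.card_eq_fintype_card, Nat.card_eq_fintype_card]
    exact Fintype.card_lt_of_surjective_not_injective f fsurj fninj
  omega

/-- If the smoothing is not a single circle, connectivity yields a crossing whose
two strands lie on different circles. -/
lemma exists_bad (S : Finset D.X)
    (hconn : ∀ d d' : D.Dart,
      Relation.EqvGen (fun a b : D.Dart => D.arc a = b ∨ a.1 = b.1) d d')
    (hne : ¬ ∀ d d', D.CircleRel S d d') :
    ∃ c : D.X, ¬ D.CircleRel S (c, 0) (c, 2) := by
  by_contra hall
  push_neg at hall
  apply hne
  have hEq : Equivalence (D.CircleRel S) := Relation.EqvGen.is_equivalence _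
  have hfour : ∀ (a : D.X) (i j : Fin 4), D.CircleRel S (a, i) (a, j) := by
    intro a i j
    have edge : ∀ k : Fin 4, D.CircleRel S (a, k) (a, D.csm S a k) :=
      fun k => Relation.EqvGen.rel _ _ (Or.inr (D.smooth_c S a k))
    have h02 := hall a
    have hm : (D.csm S a = sm0) ∨ (D.csm S a = sm1) := by
      unfold csm; split
      · exact Or.inr rfl
      · exact Or.inl rfl
    have hzero : ∀ k : Fin 4, D.CircleRel S (a, 0) (a, k) := by
      intro k
      rcases hm with h | h <;> rw [h] at edge <;> fin_cases k
      · exact hEq.refl _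
      · exact edge 0
      · exact h02
      · exact hEq.trans h02 (edge 2)
      · exact hEq.refl _
      · exact hEq.trans h02 (edge 2)
      · exact h02
      · exact edge 0
    exact hEq.trans (hEq.symm (hzero i)) (hzero j)
  intro d d'
  refine eqvGen_le hEq ?_ (hconn d d')
  rintro ⟨a1, i⟩ ⟨b1, j⟩ (h | h)
  · exact Relation.EqvGen.rel _ _ (Or.inl h)
  · cases h
    exact hfour a1 i j

end LinkDiagram

/-- a connected link diagram (the underlying 4-valent graph is
connected) admits a state `S` whose smoothing `D_S` is a single circle. -/
theorem exists_connected_smoothing (D : LinkDiagram)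
    (hconn : ∀ d d' : D.Dart,
      Relation.EqvGen (fun a b : D.Dart => D.arc a = b ∨ a.1 = b.1) d d') :
    ∃ S : Finset D.X, ∀ d d' : D.Dart, D.CircleRel S d d' := by
  classical
  suffices h : ∀ (n : ℕ) (S : Finset D.X), Nat.card (D.Circles S) ≤ n →
      ∃ S' : Finset D.X, ∀ d d' : D.Dart, D.CircleRel S' d d' from h _ ∅ le_rfl
  intro n
  induction n with
  | zero =>
    intro S hS
    refine ⟨S, fun d d' => ?_⟩
    have hemp : IsEmpty (D.Circles S) := by
      rcases Nat.card_eq_zero.mp (Nat.le_zero.mp hS) with h | h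
      · exact h
      · exact absurd (inferInstance : Finite (D.Circles S)) h.not_finite
    exact (hemp.false (D.cmk S d)).elim
  | succ n ih =>
    intro S hS
    by_cases hall : ∀ d d', D.CircleRel S d d'
    · exact ⟨S, hall⟩
    · obtain ⟨c, hc⟩ := D.exists_bad S hconn hall
      set S' := if c ∈ S then S.erase c else insert c S with hS'
      have hSS' : ∀ x, x ≠ c → (x ∈ S ↔ x ∈ S') := by
        intro x hx
        rw [hS']
        split <;> simp [Finset.mem_erase, Finset.mem_insert, hx]
      have hcmem : (c ∈ S) ↔ ¬ (c ∈ S') := by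
        rw [hS']
        split <;> simp_all
      have hlt := D.card_toggle_lt hSS' hcmem hc
      exact ih S' (by omega)
end
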